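/- Let M be the stabilizer matrix of an N-to-1 qudit stabilizer code over Z_d (N−1 linearly independent, pairwise symplectically orthogonal rows). Then there exist logical operators, i.e., vectors (a_Z|b_Z), (a_X|b_X) ∈ Z_d^{2N} symplectically orthogonal to every row of M with ⟨(a_Z|b_Z),(a_X|b_X)⟩ = 1, and the N+1 vectors consisting of the rows of M together with (a_Z|b_Z) and (a_X|b_X) are linearly independent. -/

import Mathlib

/-!
The orthogonal complement `W⊥` of the span `W` of the `N - 1` rows has dimension
`2N - (N - 1) = N + 1 > N - 1`, so it is not contained in `W = W⊥⊥`. Hence some `y ∈ W⊥` pairs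
nontrivially with some `z ∈ W⊥`, and rescaling `y` gives a pair `z, x ∈ W⊥` with `⟨z, x⟩ = 1`.
Such a hyperbolic pair is independent of the rows: for `w = s z + t x` in the span of the rows,
`s = ⟨w, x⟩ = 0` and `t = ⟨z, w⟩ = 0`.
-/

open Matrix

/-- The standard symplectic form ⟨(a|b),(a'|b')⟩ = a·b' − b·a' on Z_d^{2N}. -/
def symp (d N : ℕ) (p q : (Fin N → ZMod d) × (Fin N → ZMod d)) : ZMod d :=
  p.1 ⬝ᵥ q.2 - p.2 ⬝ᵥ q.1

open LinearMap (BilinForm)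

namespace LinearMap.BilinForm

section HyperbolicPair

variable {R V : Type*} [CommRing R] [AddCommGroup V] [Module R V] {B : BilinForm R V}
  {z x : V}

lemma IsAlt.apply_smul_add_smul_right (hB : B.IsAlt) (h : B z x = 1) (s t : R) :
    B (s • z + t • x) x = s := by
  simp [hB.self_eq_zero x, h]

lemma IsAlt.apply_smul_add_smul_left (hB : B.IsAlt) (h : B z x = 1) (s t : R) :
    B z (s • z + t • x) = t := by
  simp [hB.self_eq_zero z, h]

lemma IsAlt.linearIndependent_pair (hB : B.IsAlt) (h : B z x = 1) :
    LinearIndependent R ![z, x] := by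
  refine LinearIndependent.pair_iff.2 fun s t hst => ⟨?_, ?_⟩
  · rw [← hB.apply_smul_add_smul_right h s t, hst, map_zero, LinearMap.zero_apply]
  · rw [← hB.apply_smul_add_smul_left h s t, hst, map_zero]

lemma apply_eq_zero_of_mem_span_range {ι : Type*} {v : ι → V} {y w : V}
    (h : ∀ i, B (v i) y = 0) (hw : w ∈ Submodule.span R (Set.range v)) : B w y = 0 :=
  (Submodule.span_le (p := LinearMap.ker (B.flip y))).2 (Set.range_subset_iff.2 h) hw

lemma IsAlt.linearIndependent_sumElim_pair (hB : B.IsAlt) {ι : Type*} {v : ι → V}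
    (hv : LinearIndependent R v) (hvz : ∀ i, B (v i) z = 0) (hvx : ∀ i, B (v i) x = 0)
    (h : B z x = 1) : LinearIndependent R (Sum.elim v ![z, x]) := by
  refine hv.sum_type (hB.linearIndependent_pair h) ?_
  rw [Submodule.disjoint_def, Matrix.range_cons_cons_empty]
  intro w hwv hwzx
  obtain ⟨s, t, rfl⟩ := Submodule.mem_span_pair.1 hwzx
  have hs : s = 0 := by
    rw [← hB.apply_smul_add_smul_right h s t, apply_eq_zero_of_mem_span_range hvx hwv]
  have ht : t = 0 := by
    rw [← hB.apply_smul_add_smul_left h s t, ← hB.neg_eq,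
      apply_eq_zero_of_mem_span_range hvz hwv, neg_zero]
  simp [hs, ht]

end HyperbolicPair

variable {K V : Type*} [Field K] [AddCommGroup V] [Module K V] [FiniteDimensional K V]
  {B : BilinForm K V}

lemma exists_mem_orthogonal_apply_eq_one (hB : B.Nondegenerate) (hR : B.IsRefl)
    {W : Submodule K V} (hW : ¬ B.orthogonal W ≤ W) :
    ∃ z ∈ B.orthogonal W, ∃ x ∈ B.orthogonal W, B z x = 1 := by
  obtain ⟨y, hy, hyW⟩ := Set.not_subset.1 hW
  rw [SetLike.mem_coe, ← orthogonal_orthogonal hB hR W, mem_orthogonal_iff] at hyW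
  push Not at hyW
  obtain ⟨z, hz, hzy⟩ := hyW
  exact ⟨z, hz, (B z y)⁻¹ • y, Submodule.smul_mem _ _ hy,
    by rw [map_smul, smul_eq_mul, inv_mul_cancel₀ hzy]⟩

end LinearMap.BilinForm

def sympForm (d N : ℕ) :
    BilinForm (ZMod d) ((Fin N → ZMod d) × (Fin N → ZMod d)) :=
  LinearMap.mk₂ (ZMod d) (symp d N)
    (fun p p' q => by simp only [symp, Prod.fst_add, Prod.snd_add, add_dotProduct]; ring)
    (fun c p q => by simp only [symp, Prod.smul_fst, Prod.smul_snd, smul_dotProduct, smul_sub])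
    (fun p q q' => by simp only [symp, Prod.fst_add, Prod.snd_add, dotProduct_add]; ring)
    (fun c p q => by simp only [symp, Prod.smul_fst, Prod.smul_snd, dotProduct_smul, smul_sub])

@[simp] lemma sympForm_apply (d N : ℕ) (p q : (Fin N → ZMod d) × (Fin N → ZMod d)) :
    sympForm d N p q = symp d N p q := rfl

lemma sympForm_isAlt (d N : ℕ) : (sympForm d N).IsAlt := fun p => by
  simp [symp, dotProduct_comm]

lemma sympForm_nondegenerate (d N : ℕ) : (sympForm d N).Nondegenerate := by
  refine (sympForm_isAlt d N).isRefl.nondegenerate_iff_separatingLeft.2 fun p hp => ?_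
  have h₁ (i : Fin N) : p.1 i = 0 := by simpa [symp] using hp (0, Pi.single i 1)
  have h₂ (i : Fin N) : p.2 i = 0 := by simpa [symp] using hp (Pi.single i 1, 0)
  exact Prod.ext (funext h₁) (funext h₂)

theorem exists_logical_operators_general (d N : ℕ) [Fact (Nat.Prime d)] (hN : 1 ≤ N)
    (row : Fin (N - 1) → (Fin N → ZMod d) × (Fin N → ZMod d))
    (hind : LinearIndependent (ZMod d) row) :
    ∃ zL xL : (Fin N → ZMod d) × (Fin N → ZMod d),
      (∀ i, symp d N (row i) zL = 0) ∧
      (∀ i, symp d N (row i) xL = 0) ∧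
      symp d N zL xL = 1 ∧
      LinearIndependent (ZMod d)
        (Sum.elim row (fun j : Fin 2 => if j = 0 then zL else xL)) := by
  set W := Submodule.span (ZMod d) (Set.range row)
  have hW : Module.finrank (ZMod d) W = N - 1 := by
    rw [finrank_span_eq_card hind, Fintype.card_fin]
  have hWperp : Module.finrank (ZMod d) ((sympForm d N).orthogonal W) = N + 1 := by
    rw [LinearMap.BilinForm.finrank_orthogonal (sympForm_nondegenerate d N), hW,
      Module.finrank_prod, Module.finrank_fin_fun]
    omega
  obtain ⟨zL, hz, xL, hx, hzx⟩ := LinearMap.BilinForm.exists_mem_orthogonal_apply_eq_one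
    (sympForm_nondegenerate d N) (sympForm_isAlt d N).isRefl (W := W)
    (fun h => by have := Submodule.finrank_mono h; omega)
  have hrz (i : Fin (N - 1)) : symp d N (row i) zL = 0 := hz _ (Submodule.subset_span ⟨i, rfl⟩)
  have hrx (i : Fin (N - 1)) : symp d N (row i) xL = 0 := hx _ (Submodule.subset_span ⟨i, rfl⟩)
  refine ⟨zL, xL, hrz, hrx, hzx, ?_⟩
  have hpair : (fun j : Fin 2 => if j = 0 then zL else xL) = ![zL, xL] := by
    ext j : 1
    fin_cases j <;> rfl
  rw [hpair]
  exact (sympForm_isAlt d N).linearIndependent_sumElim_pair hind hrz hrx hzx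

/-- For a stabilizer matrix M (N−1 linearly independent, pairwise symplectically
orthogonal rows) there exist logical operators: vectors (a_Z|b_Z), (a_X|b_X)
symplectically orthogonal to every row of M with ⟨(a_Z|b_Z),(a_X|b_X)⟩ = 1, such
that the rows of M together with these two vectors are linearly independent. -/
theorem exists_logical_operators (d N : ℕ) [Fact (Nat.Prime d)] (hN : 1 ≤ N)
    (row : Fin (N - 1) → (Fin N → ZMod d) × (Fin N → ZMod d))
    (hind : LinearIndependent (ZMod d) row)
    (hsymp : ∀ i j, symp d N (row i) (row j) = 0) :
    ∃ zL xL : (Fin N → ZMod d) × (Fin N → ZMod d),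
      (∀ i, symp d N (row i) zL = 0) ∧
      (∀ i, symp d N (row i) xL = 0) ∧
      symp d N zL xL = 1 ∧
      LinearIndependent (ZMod d)
        (Sum.elim row (fun j : Fin 2 => if j = 0 then zL else xL)) :=
  exists_logical_operators_general d N hN row hind
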